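/- In the cycle-plus-tree setting, suppose deg(v_1)=…=deg(v_t)=2 and deg(w_1)=…=deg(w_t)=2. Then for all 1 ≤ i ≤ t and 2 ≤ r ≤ t, L_{2i}(2,…,r) = 2·K_{2i} − Σ_{j=2}^{r} (1/4)·L_{2(i−1)}(2,…,j+1). -/
import Mathlib


open Matrix

attribute [local instance] Classical.propDecidable

namespace GroverPaper

variable {V : Type*}

/-- The arc set of a simple graph: ordered pairs of adjacent vertices. -/
abbrev Arc (G : SimpleGraph V) : Type _ := {p : V × V // G.Adj p.1 p.2}

/-- The time evolution matrix of the Grover walk on a graph `G`. -/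
noncomputable def groverU [Fintype V] (G : SimpleGraph V) :
    Matrix (Arc G) (Arc G) ℂ := fun e f =>
  if f.val.2 = e.val.1 then
    if e.val = (f.val.2, f.val.1) then 2 / (G.degree f.val.2 : ℂ) - 1
    else 2 / (G.degree f.val.2 : ℂ)
  else 0

/-- A graph is periodic if some positive power of its Grover evolution is the identity. -/
def IsPeriodic [Fintype V] (G : SimpleGraph V) : Prop :=
  ∃ k : ℕ, 0 < k ∧ groverU G ^ k = 1

/-- The period of a periodic graph: the least positive `k` with `U^k = 1`. -/
noncomputable def period [Fintype V] (G : SimpleGraph V) : ℕ :=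
  sInf {k : ℕ | 0 < k ∧ groverU G ^ k = 1}

/-- A graph is `k`-periodic if it is periodic with period `k`. -/
def IsKPeriodic [Fintype V] (G : SimpleGraph V) (k : ℕ) : Prop :=
  IsPeriodic G ∧ period G = k

/-- A graph is odd-periodic if it is periodic with odd period. -/
def IsOddPeriodic [Fintype V] (G : SimpleGraph V) : Prop :=
  IsPeriodic G ∧ Odd (period G)

/-- The transition matrix of the isotropic random walk on `G`. -/
noncomputable def transition [Fintype V] (G : SimpleGraph V) :
    Matrix V V ℝ := fun u v =>
  if G.Adj u v then 1 / (G.degree u : ℝ) else 0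

/-- `M(e) = 1/(deg x · deg y)` for an edge `e = xy`. -/
noncomputable def edgeM [Fintype V] (G : SimpleGraph V) : Sym2 V → ℝ :=
  Sym2.lift ⟨fun x y => 1 / ((G.degree x : ℝ) * (G.degree y : ℝ)), fun x y => by simp [mul_comm]⟩

/-- The sum, over all `i`-matchings contained in the edge collection `A`, of the product of
the `M`-values of the matching. (For `i = 0` this is `1`; if there is no such matching it
is `0`.) -/
noncomputable def matchSum [Fintype V] (G : SimpleGraph V) (A : Finset (Sym2 V)) (i : ℕ) : ℝ :=
  ∑ S ∈ A.powerset.filter (fun S => S.card = i ∧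
      ∀ e ∈ S, ∀ f ∈ S, e ≠ f → ∀ x : V, ¬(x ∈ e ∧ x ∈ f)),
    ∏ e ∈ S, edgeM G e

/-- The edges of `G` that neither lie on the cycle `c 0 ∼ c 1 ∼ … ∼ c (k-1) ∼ c 0` nor are
incident to `u = c 0`; this is the edge set `E_T` of the paper. -/
noncomputable def treeEdges [Fintype V] {k : ℕ} (G : SimpleGraph V) (c : ZMod k → V) :
    Finset (Sym2 V) :=
  G.edgeFinset.filter fun e => (∀ i : ZMod k, e ≠ s(c i, c (i + 1))) ∧ c 0 ∉ e

/-- `K_{2i}` of the paper: the sum over all `i`-matchings in `E_T` of the products of the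
`M`-values. -/
noncomputable def Km [Fintype V] {k : ℕ} (G : SimpleGraph V) (c : ZMod k → V) (i : ℕ) : ℝ :=
  matchSum G (treeEdges G c) i

/-- `K^g_{2i}(2,…,r)` of the paper, where `v` is the path `u = v 0, v 1, v 2, …` so that
`g_j = v_{j-1} v_j`: the sum over all `i`-matchings in `E_T ∖ {g_2,…,g_r}`. -/
noncomputable def Kg [Fintype V] {k : ℕ} (G : SimpleGraph V) (c : ZMod k → V)
    (v : ℕ → V) (i r : ℕ) : ℝ :=
  matchSum G (treeEdges G c \ (Finset.Icc 2 r).image fun j => s(v (j - 1), v j)) i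

/-- `L_{2i}(2,…,r) = K^g_{2i}(2,…,r) + K^h_{2i}(2,…,r)` of the paper. -/
noncomputable def Lm [Fintype V] {k : ℕ} (G : SimpleGraph V) (c : ZMod k → V)
    (v w : ℕ → V) (i r : ℕ) : ℝ :=
  Kg G c v i r + Kg G c w i r

lemma adj_mem_of_degree {V : Type*} [Fintype V] [DecidableEq V] (G : SimpleGraph V)
    (x : V) (s : Finset V) (hs : ∀ z ∈ s, G.Adj x z) (hcard : G.degree x ≤ s.card) :
    ∀ y, G.Adj x y → y ∈ s := by
  classical
  intro y hy
  by_contra h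
  have hsub : insert y s ⊆ G.neighborFinset x := by
    intro z hz
    rcases Finset.mem_insert.mp hz with rfl | hz
    · exact (SimpleGraph.mem_neighborFinset G x z).mpr hy
    · exact (SimpleGraph.mem_neighborFinset G x z).mpr (hs z hz)
  have h1 : (insert y s).card = s.card + 1 := Finset.card_insert_of_notMem h
  have h2 := Finset.card_le_card hsub
  rw [G.card_neighborFinset_eq_degree] at h2
  omega

lemma two_ne_zero_zmod (k : ℕ) [NeZero k] (hk3 : 3 ≤ k) : (2 : ZMod k) ≠ 0 := by
  intro hh
  have h2 : ((2 : ℕ) : ZMod k) = 0 := by exact_mod_cast hh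
  rw [ZMod.natCast_eq_zero_iff] at h2
  have := Nat.le_of_dvd (by norm_num) h2
  omega

lemma sub_ne_add {k : ℕ} [NeZero k] (hk3 : 3 ≤ k) (i : ZMod k) : i - 1 ≠ i + 1 := by
  intro h
  have : (2 : ZMod k) = 0 := by linear_combination -h
  exact two_ne_zero_zmod k hk3 this

lemma no_return {V : Type*} [Fintype V] [DecidableEq V] (G : SimpleGraph V)
    (hconn : G.Connected) (k : ℕ) [NeZero k] (hk3 : 3 ≤ k)
    (c : ZMod k → V) (hcinj : Function.Injective c)
    (hcadj : ∀ i : ZMod k, G.Adj (c i) (c (i + 1)))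
    (hcard : Fintype.card V = G.edgeFinset.card)
    (hdegu : G.degree (c 0) = 4) (hdegc : ∀ i : ZMod k, i ≠ 0 → G.degree (c i) = 2)
    (x : ℕ → V) (n : ℕ) (hn : 2 ≤ n)
    (hx0 : x 0 = c 0) (hxn1 : x (n + 1) = c 0)
    (hxadj : ∀ s, s ≤ n → G.Adj (x s) (x (s + 1)))
    (hxdeg : ∀ s, 1 ≤ s → s ≤ n → G.degree (x s) = 2)
    (hxoff : ∀ s, 1 ≤ s → s ≤ n → x s ∉ Set.range c)
    (hxinj : ∀ a b, 1 ≤ a → a < b → b ≤ n → x a ≠ x b)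
    (hN0 : ∀ y, G.Adj (c 0) y → y = c 1 ∨ y = c (-1) ∨ y = x 1 ∨ y = x n) :
    False := by
  classical
  set A : Finset V := Finset.univ.image c with hA
  set B : Finset V := (Finset.Icc 1 n).image x with hB
  set S : Finset V := A ∪ B with hS
  have hcS : ∀ i : ZMod k, c i ∈ S := fun i =>
    Finset.mem_union_left _ (Finset.mem_image_of_mem c (Finset.mem_univ i))
  have hxS : ∀ s, 1 ≤ s → s ≤ n → x s ∈ S := fun s h1 h2 =>
    Finset.mem_union_right _ (Finset.mem_image_of_mem x (Finset.mem_Icc.mpr ⟨h1, h2⟩))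
  have hclosed : ∀ a b : V, G.Adj a b → a ∈ S → b ∈ S := by
    intro a b hab haS
    rcases Finset.mem_union.mp haS with hA' | hB'
    · obtain ⟨i, -, rfl⟩ := Finset.mem_image.mp hA'
      by_cases hi : i = 0
      · subst hi
        rcases hN0 b hab with rfl | rfl | rfl | rfl
        · exact hcS 1
        · exact hcS (-1)
        · exact hxS 1 le_rfl (le_trans one_le_two hn)
        · exact hxS n (le_trans one_le_two hn) le_rfl
      · have hmem := adj_mem_of_degree G (c i) {c (i - 1), c (i + 1)} ?_ ?_ b hab
        · rcases Finset.mem_insert.mp hmem with rfl | hmem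
          · exact hcS _
          · rw [Finset.mem_singleton] at hmem; subst hmem; exact hcS _
        · intro z hz
          rcases Finset.mem_insert.mp hz with rfl | hz
          · have := hcadj (i - 1)
            rw [sub_add_cancel] at this
            exact this.symm
          · rw [Finset.mem_singleton] at hz; subst hz; exact hcadj i
        · rw [hdegc i hi]
          rw [Finset.card_insert_of_notMem (by
            simp only [Finset.mem_singleton]
            exact fun h => sub_ne_add hk3 i (hcinj h)), Finset.card_singleton]
    · obtain ⟨s, hs, rfl⟩ := Finset.mem_image.mp hB'
      rw [Finset.mem_Icc] at hs
      have hne : x (s - 1) ≠ x (s + 1) := by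
        rcases Nat.lt_or_ge 1 s with h1 | h1
        · rcases Nat.lt_or_ge s n with h2 | h2
          · exact hxinj (s - 1) (s + 1) (by omega) (by omega) (by omega)
          · have hsn : s = n := by omega
            rw [hsn, hxn1]
            intro h
            exact hxoff (n - 1) (by omega) (by omega) ⟨0, h.symm⟩
        · have hs1 : s = 1 := by omega
          rw [hs1, hx0]
          intro h
          exact hxoff 2 (by omega) (by omega) ⟨0, h⟩
      have hadjm : G.Adj (x s) (x (s - 1)) := by
        have := hxadj (s - 1) (by omega)
        rw [Nat.sub_add_cancel hs.1] at this
        exact this.symm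
      have hmem := adj_mem_of_degree G (x s) {x (s - 1), x (s + 1)} ?_ ?_ b hab
      · rcases Finset.mem_insert.mp hmem with rfl | hmem
        · rcases Nat.eq_or_lt_of_le (hs.1) with h1 | h1
          · rw [← h1, hx0]; exact hcS 0
          · exact hxS (s - 1) (by omega) (by omega)
        · rw [Finset.mem_singleton] at hmem; subst hmem
          rcases Nat.eq_or_lt_of_le (hs.2) with h2 | h2
          · rw [h2, hxn1]; exact hcS 0
          · exact hxS (s + 1) (by omega) (by omega)
      · intro z hz
        rcases Finset.mem_insert.mp hz with rfl | hz
        · exact hadjm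
        · rw [Finset.mem_singleton] at hz; subst hz; exact hxadj s hs.2
      · rw [hxdeg s hs.1 hs.2]
        rw [Finset.card_insert_of_notMem (by simpa using hne), Finset.card_singleton]
  have hall : ∀ y : V, y ∈ S := by
    have hwalk : ∀ (a b : V), G.Walk a b → a ∈ S → b ∈ S := by
      intro a b p
      induction p with
      | nil => exact id
      | cons h _ ih => exact fun ha => ih (hclosed _ _ h ha)
    intro y
    obtain ⟨p⟩ := (hconn (c 0) y)
    exact hwalk _ _ p (hcS 0)
  have hSuniv : S = Finset.univ := Finset.eq_univ_iff_forall.mpr hall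
  have hdisj : Disjoint A B := by
    rw [Finset.disjoint_left]
    rintro z hzA hzB
    obtain ⟨i, -, rfl⟩ := Finset.mem_image.mp hzA
    obtain ⟨s, hs, hxs⟩ := Finset.mem_image.mp hzB
    rw [Finset.mem_Icc] at hs
    exact hxoff s hs.1 hs.2 ⟨i, hxs.symm⟩
  have hxinjOn : ∀ a ∈ Finset.Icc 1 n, ∀ b ∈ Finset.Icc 1 n, x a = x b → a = b := by
    intro a ha b hb hab
    rw [Finset.mem_Icc] at ha hb
    rcases Nat.lt_trichotomy a b with h | h | h
    · exact absurd hab (hxinj a b ha.1 h hb.2)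
    · exact h
    · exact absurd hab.symm (hxinj b a hb.1 h ha.2)
  have hcardA : A.card = k := by
    rw [hA, Finset.card_image_of_injective _ hcinj, Finset.card_univ, ZMod.card]
  have hcardB : B.card = n := by
    rw [hB, Finset.card_image_of_injOn hxinjOn, Nat.card_Icc]
    omega
  have hcardS : S.card = k + n := by
    rw [hS, Finset.card_union_of_disjoint hdisj, hcardA, hcardB]
  have hsumA : ∑ y ∈ A, G.degree y = 2 * k + 2 := by
    rw [hA, Finset.sum_image (fun a _ b _ h => hcinj h)]
    have h0 : ∑ i : ZMod k, G.degree (c i)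
        = ∑ i : ZMod k, (2 + if i = 0 then 2 else 0) := by
      refine Finset.sum_congr rfl (fun i _ => ?_)
      by_cases hi : i = 0
      · subst hi; simp [hdegu]
      · simp [hi, hdegc i hi]
    rw [h0, Finset.sum_add_distrib, Finset.sum_const, Finset.card_univ, ZMod.card,
      Finset.sum_ite_eq' Finset.univ (0 : ZMod k) (fun _ => (2 : ℕ))]
    simp [mul_comm]
  have hsumB : ∑ y ∈ B, G.degree y = 2 * n := by
    rw [hB, Finset.sum_image hxinjOn]
    have h0 : ∑ s ∈ Finset.Icc 1 n, G.degree (x s) = ∑ _s ∈ Finset.Icc 1 n, 2 := by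
      refine Finset.sum_congr rfl (fun s hs => ?_)
      rw [Finset.mem_Icc] at hs; exact hxdeg s hs.1 hs.2
    rw [h0, Finset.sum_const, Nat.card_Icc, smul_eq_mul]
    omega
  have hsum : ∑ y : V, G.degree y = 2 * G.edgeFinset.card :=
    SimpleGraph.sum_degrees_eq_twice_card_edges G
  rw [← hSuniv, hS, Finset.sum_union hdisj, hsumA, hsumB, ← hcard] at hsum
  have : Fintype.card V = k + n := by
    rw [← Finset.card_univ, ← hSuniv, hcardS]
  omega


/-- every neighbor of an interior path vertex is its predecessor or successor. -/
lemma path_nbhd {V : Type*} [Fintype V] [DecidableEq V] (G : SimpleGraph V)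
    (t : ℕ) (p : ℕ → V)
    (hpadj : ∀ s : ℕ, s < (t + 1) → G.Adj (p s) (p (s + 1)))
    (hpnb : ∀ s : ℕ, s + 2 ≤ (t + 1) → p (s + 2) ≠ p s)
    (hpdeg : ∀ s : ℕ, 1 ≤ s → s ≤ t → G.degree (p s) = 2) :
    ∀ s, 1 ≤ s → s ≤ t → ∀ y, G.Adj (p s) y → y = p (s - 1) ∨ y = p (s + 1) := by
  intro s hs1 hst y hy
  have hadjm : G.Adj (p s) (p (s - 1)) := by
    have := hpadj (s - 1) (by omega)
    rw [Nat.sub_add_cancel hs1] at this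
    exact this.symm
  have hne : p (s - 1) ≠ p (s + 1) := by
    have h2 : s - 1 + 2 = s + 1 := by omega
    have := hpnb (s - 1) (by omega)
    rw [h2] at this
    exact (Ne.symm this)
  have hmem := adj_mem_of_degree G (p s) {p (s - 1), p (s + 1)} ?_ ?_ y hy
  · rcases Finset.mem_insert.mp hmem with rfl | hmem
    · exact Or.inl rfl
    · exact Or.inr (Finset.mem_singleton.mp hmem)
  · intro z hz
    rcases Finset.mem_insert.mp hz with rfl | hz
    · exact hadjm
    · rw [Finset.mem_singleton] at hz; subst hz; exact hpadj s (by omega)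
  · rw [hpdeg s hs1 hst, Finset.card_insert_of_notMem (by simpa using hne),
      Finset.card_singleton]



/-- every neighbor of a non-central cycle vertex is its cycle neighbor. -/
lemma cycle_nbhd {V : Type*} [Fintype V] [DecidableEq V] (G : SimpleGraph V)
    (k : ℕ) [NeZero k] (hk3 : 3 ≤ k) (c : ZMod k → V) (hcinj : Function.Injective c)
    (hcadj : ∀ i : ZMod k, G.Adj (c i) (c (i + 1)))
    (hdegc : ∀ i : ZMod k, i ≠ 0 → G.degree (c i) = 2) :
    ∀ i : ZMod k, i ≠ 0 → ∀ y, G.Adj (c i) y → y = c (i - 1) ∨ y = c (i + 1) := by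
  intro i hi0 y hy
  have hmem := adj_mem_of_degree G (c i) {c (i - 1), c (i + 1)} ?_ ?_ y hy
  · rcases Finset.mem_insert.mp hmem with rfl | hmem
    · exact Or.inl rfl
    · exact Or.inr (Finset.mem_singleton.mp hmem)
  · intro z hz
    rcases Finset.mem_insert.mp hz with rfl | hz
    · have := hcadj (i - 1)
      rw [sub_add_cancel] at this
      exact this.symm
    · rw [Finset.mem_singleton] at hz; subst hz; exact hcadj i
  · rw [hdegc i hi0]
    rw [Finset.card_insert_of_notMem (by
      simp only [Finset.mem_singleton]
      exact fun h => sub_ne_add hk3 i (hcinj h)), Finset.card_singleton]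

/-- every neighbor of `c 0` is `c 1`, `c (-1)`, `p 1` or `q 1`. -/
lemma center_nbhd {V : Type*} [Fintype V] [DecidableEq V] (G : SimpleGraph V)
    (k : ℕ) [NeZero k] (hk3 : 3 ≤ k)
    (c : ZMod k → V) (hcinj : Function.Injective c)
    (hcadj : ∀ i : ZMod k, G.Adj (c i) (c (i + 1)))
    (hdegu : G.degree (c 0) = 4)
    (t : ℕ) (ht : 1 ≤ t) (p q : ℕ → V) (hp0 : p 0 = c 0) (hq0 : q 0 = c 0)
    (hpadj : ∀ s : ℕ, s < (t + 1) → G.Adj (p s) (p (s + 1)))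
    (hqadj : ∀ s : ℕ, s < (t + 1) → G.Adj (q s) (q (s + 1)))
    (hp1 : p 1 ∉ Set.range c) (hq1 : q 1 ∉ Set.range c) (hpq : p 1 ≠ q 1) :
    ∀ y, G.Adj (c 0) y → y = c 1 ∨ y = c (-1) ∨ y = p 1 ∨ y = q 1 := by
  have hc1 : c 1 ≠ c (-1) := by
    intro h
    have := hcinj h
    have h2 : (2 : ZMod k) = 0 := by linear_combination this
    exact two_ne_zero_zmod k hk3 h2
  have hmem := adj_mem_of_degree G (c 0) {c 1, c (-1), p 1, q 1} ?_ ?_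
  · intro y hy
    have := hmem y hy
    simp only [Finset.mem_insert, Finset.mem_singleton] at this
    tauto
  · intro z hz
    simp only [Finset.mem_insert, Finset.mem_singleton] at hz
    rcases hz with rfl | rfl | rfl | rfl
    · simpa using hcadj 0
    · have := hcadj (-1); rw [neg_add_cancel] at this; exact this.symm
    · have := hpadj 0 (by omega); rwa [hp0] at this
    · have := hqadj 0 (by omega); rwa [hq0] at this
  · rw [hdegu]
    have n1 : c 1 ∉ ({c (-1), p 1, q 1} : Finset V) := by
      simp only [Finset.mem_insert, Finset.mem_singleton]
      push_neg
      exact ⟨hc1, fun h => hp1 ⟨1, h⟩, fun h => hq1 ⟨1, h⟩⟩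
    have n2 : c (-1) ∉ ({p 1, q 1} : Finset V) := by
      simp only [Finset.mem_insert, Finset.mem_singleton]
      push_neg
      exact ⟨fun h => hp1 ⟨-1, h⟩, fun h => hq1 ⟨-1, h⟩⟩
    have n3 : p 1 ∉ ({q 1} : Finset V) := by simpa using hpq
    rw [Finset.card_insert_of_notMem n1, Finset.card_insert_of_notMem n2,
      Finset.card_insert_of_notMem n3, Finset.card_singleton]


/-- Two degree-2 paths from `c 0` that meet produce a second cycle: contradiction. -/
lemma meet_contra {V : Type*} [Fintype V] [DecidableEq V] (G : SimpleGraph V)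
    (hconn : G.Connected) (k : ℕ) [NeZero k] (hk3 : 3 ≤ k)
    (c : ZMod k → V) (hcinj : Function.Injective c)
    (hcadj : ∀ i : ZMod k, G.Adj (c i) (c (i + 1)))
    (hcard : Fintype.card V = G.edgeFinset.card)
    (hdegu : G.degree (c 0) = 4) (hdegc : ∀ i : ZMod k, i ≠ 0 → G.degree (c i) = 2)
    (t : ℕ) (p q : ℕ → V) (hp0 : p 0 = c 0) (hq0 : q 0 = c 0)
    (hpadj : ∀ s : ℕ, s < (t + 1) → G.Adj (p s) (p (s + 1)))
    (hqadj : ∀ s : ℕ, s < (t + 1) → G.Adj (q s) (q (s + 1)))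
    (hpdeg : ∀ s : ℕ, 1 ≤ s → s ≤ t → G.degree (p s) = 2)
    (hqdeg : ∀ s : ℕ, 1 ≤ s → s ≤ t → G.degree (q s) = 2)
    (hN0 : ∀ y, G.Adj (c 0) y → y = c 1 ∨ y = c (-1) ∨ y = p 1 ∨ y = q 1)
    (a b : ℕ) (ha1 : 1 ≤ a) (hb1 : 1 ≤ b) (hat : a ≤ t) (hbt : b ≤ t)
    (hab3 : 3 ≤ a + b) (hmeet : p a = q b)
    (hpoff : ∀ m, 1 ≤ m → m ≤ a → p m ∉ Set.range c)
    (hqoff : ∀ m, 1 ≤ m → m ≤ b - 1 → q m ∉ Set.range c)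
    (hpinj : ∀ i j, 1 ≤ i → i < j → j ≤ a → p i ≠ p j)
    (hqinj : ∀ i j, 1 ≤ i → i < j → j ≤ b - 1 → q i ≠ q j)
    (hcross : ∀ i j, 1 ≤ i → i ≤ a → 1 ≤ j → j ≤ b - 1 → p i ≠ q j) :
    False := by
  set x : ℕ → V := fun m => if m ≤ a then p m else q (a + b - m) with hx
  set n : ℕ := a + b - 1 with hn'
  have hxp : ∀ m, m ≤ a → x m = p m := by
    intro m hm; simp only [hx, if_pos hm]
  have hxq : ∀ m, a < m → x m = q (a + b - m) := by
    intro m hm; simp only [hx]; rw [if_neg (by omega : ¬ m ≤ a)]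
  refine no_return G hconn k hk3 c hcinj hcadj hcard hdegu hdegc x n (by omega) ?_ ?_ ?_ ?_ ?_ ?_ ?_
  · rw [hxp 0 (by omega)]; exact hp0
  · have : n + 1 = a + b := by omega
    rw [this, hxq (a+b) (by omega)]
    simpa using hq0
  · -- adjacency
    intro s hs
    rcases Nat.lt_trichotomy s a with h | h | h
    · rw [hxp s (by omega), hxp (s+1) (by omega)]
      exact hpadj s (by omega)
    · subst h
      rw [hxp s (by omega), hxq (s+1) (by omega)]
      have h1 : s + b - (s + 1) = b - 1 := by omega
      rw [h1, hmeet]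
      have := hqadj (b-1) (by omega)
      rw [Nat.sub_add_cancel hb1] at this
      exact this.symm
    · rw [hxq s h, hxq (s+1) (by omega)]
      have h1 : a + b - s = (a + b - (s+1)) + 1 := by omega
      rw [h1]
      exact (hqadj (a + b - (s+1)) (by omega)).symm
  · -- degrees
    intro s h1 h2
    rcases le_or_gt s a with h | h
    · rw [hxp s h]; exact hpdeg s h1 (by omega)
    · rw [hxq s h]; exact hqdeg _ (by omega) (by omega)
  · -- off cycle
    intro s h1 h2
    rcases le_or_gt s a with h | h
    · rw [hxp s h]; exact hpoff s h1 h
    · rw [hxq s h]; exact hqoff _ (by omega) (by omega)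
  · -- injective
    intro i j h1 hij hj
    rcases le_or_gt j a with h | h
    · rw [hxp i (by omega), hxp j h]
      exact hpinj i j h1 hij h
    · rcases le_or_gt i a with h2 | h2
      · rw [hxp i h2, hxq j h]
        exact hcross i (a + b - j) h1 h2 (by omega) (by omega)
      · rw [hxq i h2, hxq j h]
        exact fun hh => hqinj (a + b - j) (a + b - i) (by omega) (by omega) (by omega) hh.symm
  · -- neighbors of c 0
    intro y hy
    have hx1 : x 1 = p 1 := hxp 1 ha1
    have hxn : x n = q 1 := by
      rcases Nat.lt_or_ge a n with h | h
      · rw [hxq n h]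
        congr 1
        omega
      · have hb : b = 1 := by omega
        have hna : n = a := by omega
        rw [hna, hxp a le_rfl, hmeet, hb]
    rw [hx1, hxn]
    exact hN0 y hy


lemma paths_good {V : Type*} [Fintype V] [DecidableEq V] (G : SimpleGraph V)
    (hconn : G.Connected) (k : ℕ) [NeZero k] (hk3 : 3 ≤ k)
    (c : ZMod k → V) (hcinj : Function.Injective c)
    (hcadj : ∀ i : ZMod k, G.Adj (c i) (c (i + 1)))
    (hcard : Fintype.card V = G.edgeFinset.card)
    (hdegu : G.degree (c 0) = 4) (hdegc : ∀ i : ZMod k, i ≠ 0 → G.degree (c i) = 2)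
    (t : ℕ) (ht : 1 ≤ t)
    (v w : ℕ → V) (hv0 : v 0 = c 0) (hw0 : w 0 = c 0)
    (hvadj : ∀ s : ℕ, s < (t + 1) → G.Adj (v s) (v (s + 1)))
    (hwadj : ∀ s : ℕ, s < (t + 1) → G.Adj (w s) (w (s + 1)))
    (hv1 : v 1 ∉ Set.range c) (hw1 : w 1 ∉ Set.range c) (hvw : v 1 ≠ w 1)
    (hvnb : ∀ s : ℕ, s + 2 ≤ (t + 1) → v (s + 2) ≠ v s)
    (hwnb : ∀ s : ℕ, s + 2 ≤ (t + 1) → w (s + 2) ≠ w s)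
    (hvdeg : ∀ s : ℕ, 1 ≤ s → s ≤ t → G.degree (v s) = 2)
    (hwdeg : ∀ s : ℕ, 1 ≤ s → s ≤ t → G.degree (w s) = 2) :
    ∀ s, 1 ≤ s → s ≤ t →
      v s ∉ Set.range c ∧ w s ∉ Set.range c ∧
      (∀ a, 1 ≤ a → a < s → v a ≠ v s) ∧ (∀ a, 1 ≤ a → a < s → w a ≠ w s) ∧
      (∀ a, 1 ≤ a → a ≤ s → v a ≠ w s ∧ v s ≠ w a) := by
  have hN0 := center_nbhd G k hk3 c hcinj hcadj hdegu t ht v w hv0 hw0 hvadj hwadj hv1 hw1 hvw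
  have hN0' : ∀ y, G.Adj (c 0) y → y = c 1 ∨ y = c (-1) ∨ y = w 1 ∨ y = v 1 := by
    intro y hy; rcases hN0 y hy with h|h|h|h <;> tauto
  have hnbv := path_nbhd G t v hvadj hvnb hvdeg
  have hnbw := path_nbhd G t w hwadj hwnb hwdeg
  have hnbc := cycle_nbhd G k hk3 c hcinj hcadj hdegc
  intro s
  induction s using Nat.strong_induction_on with
  | _ s IH =>
  intro hs1 hst
  by_cases hs1' : s = 1
  · subst hs1'
    refine ⟨hv1, hw1, ?_, ?_, fun a h1 h2 => ?_⟩
    · intro a h1 h2; exact absurd h2 (by omega)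
    · intro a h1 h2; exact absurd h2 (by omega)
    have : a = 1 := by omega
    subst this
    exact ⟨hvw, hvw⟩
  have hs2 : 2 ≤ s := by omega
  have IHoffv : ∀ m, 1 ≤ m → m < s → v m ∉ Set.range c :=
    fun m h1 h2 => (IH m h2 h1 (by omega)).1
  have IHoffw : ∀ m, 1 ≤ m → m < s → w m ∉ Set.range c :=
    fun m h1 h2 => (IH m h2 h1 (by omega)).2.1
  have IHv : ∀ a b, 1 ≤ a → a < b → b < s → v a ≠ v b :=
    fun a b h1 h2 h3 => (IH b h3 (by omega) (by omega)).2.2.1 a h1 h2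
  have IHw : ∀ a b, 1 ≤ a → a < b → b < s → w a ≠ w b :=
    fun a b h1 h2 h3 => (IH b h3 (by omega) (by omega)).2.2.2.1 a h1 h2
  have IHcross : ∀ a b, 1 ≤ a → 1 ≤ b → a < s → b < s → v a ≠ w b := by
    intro a b h1 h2 h3 h4
    rcases le_or_gt a b with h | h
    · exact ((IH b h4 (by omega) (by omega)).2.2.2.2 a h1 h).1
    · exact ((IH a h3 (by omega) (by omega)).2.2.2.2 b h2 (by omega)).2
  -- Part A : off the cycle
  have hoffvs : v s ∉ Set.range c := by
    rintro ⟨i, hi⟩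
    have hadj : G.Adj (c i) (v (s - 1)) := by
      have h0 := hvadj (s - 1) (by omega)
      rw [Nat.sub_add_cancel (by omega), ← hi] at h0
      exact h0.symm
    by_cases hi0 : i = 0
    · subst hi0
      rcases hN0 _ hadj with h | h | h | h
      · exact IHoffv (s-1) (by omega) (by omega) ⟨1, h.symm⟩
      · exact IHoffv (s-1) (by omega) (by omega) ⟨-1, h.symm⟩
      · by_cases hss : s = 2
        · subst hss
          exact hvnb 0 (by omega) (by rw [hv0, ← hi])
        · exact IHv 1 (s-1) le_rfl (by omega) (by omega) h.symm
      · by_cases hss : s = 2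
        · rw [hss] at h; exact hvw h
        · exact IHcross (s-1) 1 (by omega) le_rfl (by omega) (by omega) h
    · rcases hnbc i hi0 _ hadj with h | h
      · exact IHoffv (s-1) (by omega) (by omega) ⟨i - 1, h.symm⟩
      · exact IHoffv (s-1) (by omega) (by omega) ⟨i + 1, h.symm⟩
  have hoffws : w s ∉ Set.range c := by
    rintro ⟨i, hi⟩
    have hadj : G.Adj (c i) (w (s - 1)) := by
      have h0 := hwadj (s - 1) (by omega)
      rw [Nat.sub_add_cancel (by omega), ← hi] at h0
      exact h0.symm
    by_cases hi0 : i = 0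
    · subst hi0
      rcases hN0 _ hadj with h | h | h | h
      · exact IHoffw (s-1) (by omega) (by omega) ⟨1, h.symm⟩
      · exact IHoffw (s-1) (by omega) (by omega) ⟨-1, h.symm⟩
      · by_cases hss : s = 2
        · rw [hss] at h; exact hvw (h.symm)
        · exact IHcross 1 (s-1) le_rfl (by omega) (by omega) (by omega) h.symm
      · by_cases hss : s = 2
        · subst hss
          exact hwnb 0 (by omega) (by rw [hw0, ← hi])
        · exact IHw 1 (s-1) le_rfl (by omega) (by omega) h.symm
    · rcases hnbc i hi0 _ hadj with h | h
      · exact IHoffw (s-1) (by omega) (by omega) ⟨i - 1, h.symm⟩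
      · exact IHoffw (s-1) (by omega) (by omega) ⟨i + 1, h.symm⟩
  -- Part C : self distinctness
  have hvvs : ∀ a, 1 ≤ a → a < s → v a ≠ v s := by
    intro a ha1 has heq
    by_cases h1 : s = a + 1
    · subst h1; exact (hvadj a (by omega)).ne heq
    by_cases h2 : s = a + 2
    · subst h2; exact hvnb a (by omega) heq.symm
    have ha3 : a + 3 ≤ s := by omega
    have hadj : G.Adj (v a) (v (s - 1)) := by
      have h0 := hvadj (s - 1) (by omega)
      rw [Nat.sub_add_cancel (by omega)] at h0
      rw [← heq] at h0
      exact h0.symm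
    rcases hnbv a ha1 (by omega) _ hadj with h | h
    · by_cases ha : a = 1
      · subst ha
        exact IHoffv (s-1) (by omega) (by omega) ⟨0, by rw [← hv0]; exact h.symm⟩
      · exact IHv (a-1) (s-1) (by omega) (by omega) (by omega) h.symm
    · exact IHv (a+1) (s-1) (by omega) (by omega) (by omega) h.symm
  have hwws : ∀ a, 1 ≤ a → a < s → w a ≠ w s := by
    intro a ha1 has heq
    by_cases h1 : s = a + 1
    · subst h1; exact (hwadj a (by omega)).ne heq
    by_cases h2 : s = a + 2
    · subst h2; exact hwnb a (by omega) heq.symm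
    have ha3 : a + 3 ≤ s := by omega
    have hadj : G.Adj (w a) (w (s - 1)) := by
      have h0 := hwadj (s - 1) (by omega)
      rw [Nat.sub_add_cancel (by omega)] at h0
      rw [← heq] at h0
      exact h0.symm
    rcases hnbw a ha1 (by omega) _ hadj with h | h
    · by_cases ha : a = 1
      · subst ha
        exact IHoffw (s-1) (by omega) (by omega) ⟨0, by rw [← hw0]; exact h.symm⟩
      · exact IHw (a-1) (s-1) (by omega) (by omega) (by omega) h.symm
    · exact IHw (a+1) (s-1) (by omega) (by omega) (by omega) h.symm
  -- Part E1 : cross distinctness at lower index, both orientations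
  have E1vw : ∀ a, 1 ≤ a → a < s → v a ≠ w s := by
    intro a ha1 has heq
    exact meet_contra G hconn k hk3 c hcinj hcadj hcard hdegu hdegc t v w hv0 hw0
      hvadj hwadj hvdeg hwdeg hN0 a s ha1 (by omega) (by omega) hst (by omega) heq
      (fun m h1 h2 => IHoffv m h1 (by omega))
      (fun m h1 h2 => IHoffw m h1 (by omega))
      (fun i j h1 h2 h3 => IHv i j h1 h2 (by omega))
      (fun i j h1 h2 h3 => IHw i j h1 h2 (by omega))
      (fun i j h1 h2 h3 h4 => IHcross i j h1 h3 (by omega) (by omega))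
  have E1wv : ∀ a, 1 ≤ a → a < s → w a ≠ v s := by
    intro a ha1 has heq
    exact meet_contra G hconn k hk3 c hcinj hcadj hcard hdegu hdegc t w v hw0 hv0
      hwadj hvadj hwdeg hvdeg hN0' a s ha1 (by omega) (by omega) hst (by omega) heq
      (fun m h1 h2 => IHoffw m h1 (by omega))
      (fun m h1 h2 => IHoffv m h1 (by omega))
      (fun i j h1 h2 h3 => IHw i j h1 h2 (by omega))
      (fun i j h1 h2 h3 => IHv i j h1 h2 (by omega))
      (fun i j h1 h2 h3 h4 => (IHcross j i h3 h1 (by omega) (by omega)).symm)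
  -- Part E2 : v s ≠ w s
  have E2 : v s ≠ w s := by
    intro heq
    refine meet_contra G hconn k hk3 c hcinj hcadj hcard hdegu hdegc t v w hv0 hw0
      hvadj hwadj hvdeg hwdeg hN0 s s (by omega) (by omega) hst hst (by omega) heq
      ?_ ?_ ?_ ?_ ?_
    · intro m h1 h2
      rcases eq_or_lt_of_le h2 with h | h
      · rw [h]; exact hoffvs
      · exact IHoffv m h1 h
    · exact fun m h1 h2 => IHoffw m h1 (by omega)
    · intro i j h1 h2 h3
      rcases eq_or_lt_of_le h3 with h | h
      · rw [h]; exact hvvs i h1 (by omega)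
      · exact IHv i j h1 h2 h
    · exact fun i j h1 h2 h3 => IHw i j h1 h2 (by omega)
    · intro i j h1 h2 h3 h4
      rcases eq_or_lt_of_le h2 with h | h
      · rw [h]; exact fun hh => E1wv j h3 (by omega) hh.symm
      · exact IHcross i j h1 h3 h (by omega)
  refine ⟨hoffvs, hoffws, hvvs, hwws, fun a h1 h2 => ⟨?_, ?_⟩⟩
  · rcases eq_or_lt_of_le h2 with h | h
    · rw [h]; exact E2
    · exact E1vw a h1 h
  · rcases eq_or_lt_of_le h2 with h | h
    · rw [h]; exact E2
    · exact fun hh => E1wv a h1 h hh.symm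


lemma matchSum_erase [Fintype V] (G : SimpleGraph V) (A D : Finset (Sym2 V)) (i : ℕ)
    (hi : 1 ≤ i) (g : Sym2 V) (hgA : g ∈ A)
    (hDA : D ⊆ A.erase g)
    (hclose : ∀ e ∈ A.erase g, (∀ x : V, ¬(x ∈ e ∧ x ∈ g)) → e ∈ D)
    (hsound : ∀ e ∈ D, ∀ x : V, ¬(x ∈ e ∧ x ∈ g)) :
    matchSum G A i = matchSum G (A.erase g) i + edgeM G g * matchSum G D (i - 1) := by
  unfold matchSum
  rw [← Finset.sum_filter_add_sum_filter_not
    (A.powerset.filter (fun S => S.card = i ∧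
      ∀ e ∈ S, ∀ f ∈ S, e ≠ f → ∀ x : V, ¬(x ∈ e ∧ x ∈ f))) (fun S => g ∈ S)]
  have hpart2 : (A.powerset.filter (fun S => S.card = i ∧
        ∀ e ∈ S, ∀ f ∈ S, e ≠ f → ∀ x : V, ¬(x ∈ e ∧ x ∈ f))).filter (fun S => ¬ g ∈ S)
      = (A.erase g).powerset.filter (fun S => S.card = i ∧
        ∀ e ∈ S, ∀ f ∈ S, e ≠ f → ∀ x : V, ¬(x ∈ e ∧ x ∈ f)) := by
    ext S
    simp only [Finset.mem_filter, Finset.mem_powerset, Finset.subset_erase]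
    tauto
  have hgD : g ∉ D := by
    intro h
    exact hsound g h g.out.1 ⟨Sym2.out_fst_mem g, Sym2.out_fst_mem g⟩
  have hpart1 : ∑ S ∈ (A.powerset.filter (fun S => S.card = i ∧
        ∀ e ∈ S, ∀ f ∈ S, e ≠ f → ∀ x : V, ¬(x ∈ e ∧ x ∈ f))).filter (fun S => g ∈ S),
        ∏ e ∈ S, edgeM G e
      = ∑ S ∈ D.powerset.filter (fun S => S.card = i - 1 ∧
        ∀ e ∈ S, ∀ f ∈ S, e ≠ f → ∀ x : V, ¬(x ∈ e ∧ x ∈ f)),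
        edgeM G g * ∏ e ∈ S, edgeM G e := by
    refine Finset.sum_nbij' (fun S => S.erase g) (fun S => insert g S) ?_ ?_ ?_ ?_ ?_
    · intro S hS
      simp only [Finset.mem_filter, Finset.mem_powerset] at hS
      obtain ⟨⟨hSA, hScard, hSm⟩, hSg⟩ := hS
      simp only [Finset.mem_filter, Finset.mem_powerset]
      refine ⟨?_, ?_, ?_⟩
      · intro e he
        rw [Finset.mem_erase] at he
        obtain ⟨heg, heS⟩ := he
        refine hclose e (Finset.mem_erase.mpr ⟨heg, hSA heS⟩) ?_
        exact hSm e heS g hSg heg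
      · rw [Finset.card_erase_of_mem hSg, hScard]
      · intro e he f hf
        rw [Finset.mem_erase] at he hf
        exact hSm e he.2 f hf.2
    · intro S hS
      simp only [Finset.mem_filter, Finset.mem_powerset] at hS
      obtain ⟨hSD, hScard, hSm⟩ := hS
      have hgS : g ∉ S := fun h => hgD (hSD h)
      simp only [Finset.mem_filter, Finset.mem_powerset]
      refine ⟨⟨?_, ?_, ?_⟩, Finset.mem_insert_self _ _⟩
      · intro e he
        rcases Finset.mem_insert.mp he with rfl | he
        · exact hgA
        · exact Finset.mem_of_mem_erase (hDA (hSD he))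
      · rw [Finset.card_insert_of_notMem hgS, hScard]
        omega
      · intro e he f hf hef x hx
        rcases Finset.mem_insert.mp he with he' | he' <;>
          rcases Finset.mem_insert.mp hf with hf' | hf'
        · exact hef (he'.trans hf'.symm)
        · exact hsound f (hSD hf') x ⟨hx.2, he' ▸ hx.1⟩
        · exact hsound e (hSD he') x ⟨hx.1, hf' ▸ hx.2⟩
        · exact hSm e he' f hf' hef x hx
    · intro S hS
      simp only [Finset.mem_filter] at hS
      exact Finset.insert_erase hS.2
    · intro S hS
      simp only [Finset.mem_filter, Finset.mem_powerset] at hS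
      exact Finset.erase_insert (fun h => hgD (hS.1 h))
    · intro S hS
      simp only [Finset.mem_filter] at hS
      exact (Finset.mul_prod_erase S (edgeM G) hS.2).symm
  rw [hpart1, hpart2, ← Finset.mul_sum]
  ring

lemma step_identity [Fintype V] (G : SimpleGraph V) {k : ℕ} [NeZero k]
    (c : ZMod k → V) (t : ℕ) (p : ℕ → V)
    (hp0 : p 0 = c 0)
    (hpadj : ∀ s : ℕ, s < (t + 1) → G.Adj (p s) (p (s + 1)))
    (hpnb : ∀ s : ℕ, s + 2 ≤ (t + 1) → p (s + 2) ≠ p s)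
    (hpdeg : ∀ s : ℕ, 1 ≤ s → s ≤ t → G.degree (p s) = 2)
    (hoff : ∀ s, 1 ≤ s → s ≤ t → p s ∉ Set.range c)
    (hinj : ∀ a b, 1 ≤ a → a < b → b ≤ t → p a ≠ p b)
    (j : ℕ) (hj2 : 2 ≤ j) (hjt : j ≤ t) (i : ℕ) (hi : 1 ≤ i) :
    Kg G c p i (j - 1) = Kg G c p i j + (1 / 4 : ℝ) * Kg G c p (i - 1) (j + 1) := by
  classical
  unfold Kg
  set gE : ℕ → Sym2 V := fun l => s(p (l - 1), p l) with hgE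
  have hnb := path_nbhd G t p hpadj hpnb hpdeg
  have hadjj : G.Adj (p (j - 1)) (p j) := by
    have h0 := hpadj (j - 1) (by omega)
    rwa [Nat.sub_add_cancel (by omega)] at h0
  have gmem : gE j ∈ treeEdges G c := by
    simp only [hgE, treeEdges, Finset.mem_filter, SimpleGraph.mem_edgeFinset]
    refine ⟨?_, ?_, ?_⟩
    · exact hadjj
    · intro i' heq
      rw [Sym2.eq_iff] at heq
      rcases heq with ⟨h1, -⟩ | ⟨h1, -⟩
      · exact hoff (j-1) (by omega) (by omega) ⟨i', h1.symm⟩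
      · exact hoff (j-1) (by omega) (by omega) ⟨i' + 1, h1.symm⟩
    · intro hc
      rw [Sym2.mem_iff] at hc
      rcases hc with h1 | h1
      · exact hoff (j-1) (by omega) (by omega) ⟨0, h1⟩
      · exact hoff j (by omega) hjt ⟨0, h1⟩
  have F2 : ∀ e ∈ treeEdges G c, ∀ m, 1 ≤ m → m ≤ t → p m ∈ e →
      e = gE m ∨ e = gE (m + 1) := by
    intro e he m hm1 hmt hme
    obtain ⟨y, rfl⟩ := Sym2.mem_iff_exists.mp hme
    have hadj : G.Adj (p m) y := by
      simp only [treeEdges, Finset.mem_filter, SimpleGraph.mem_edgeFinset] at he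
      exact he.1
    rcases hnb m hm1 hmt y hadj with rfl | rfl
    · left
      rw [hgE]
      exact Sym2.eq_swap
    · right
      rw [hgE]
      simp
  have gne : ∀ l m, 1 ≤ l → l < m → m ≤ t → gE l ≠ gE m := by
    intro l m hl1 hlm hmt heq
    rw [hgE, Sym2.eq_iff] at heq
    rcases heq with ⟨-, h2⟩ | ⟨h1, h2⟩
    · exact hinj l m hl1 hlm hmt h2
    · rcases lt_or_ge l (m - 1) with h | h
      · exact hinj l (m-1) hl1 h (by omega) h2
      · have h3 := hpnb (l - 1) (by omega)
        have h4 : l - 1 + 2 = m := by omega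
        rw [h4] at h3
        exact h3 (by rw [← h1])
  have hcne : c 0 ∈ gE 1 := by
    rw [hgE]
    simp only [Sym2.mem_iff]
    left
    rw [← hp0]
  have hicc1 : Finset.Icc 2 j = insert j (Finset.Icc 2 (j-1)) := by
    ext m
    simp only [Finset.mem_Icc, Finset.mem_insert]
    omega
  have hicc2 : Finset.Icc 2 (j+1) = insert (j+1) (Finset.Icc 2 j) := by
    ext m
    simp only [Finset.mem_Icc, Finset.mem_insert]
    omega
  have hBA : treeEdges G c \ (Finset.Icc 2 j).image gE
      = (treeEdges G c \ (Finset.Icc 2 (j-1)).image gE).erase (gE j) := by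
    rw [hicc1, Finset.image_insert, Finset.sdiff_insert]
  have hCB : treeEdges G c \ (Finset.Icc 2 (j+1)).image gE
      = ((treeEdges G c \ (Finset.Icc 2 (j-1)).image gE).erase (gE j)).erase (gE (j+1)) := by
    rw [hicc2, Finset.image_insert, Finset.sdiff_insert, hBA]
  have hgjC : gE j ∉ treeEdges G c \ (Finset.Icc 2 (j+1)).image gE := by
    rw [Finset.mem_sdiff]
    push_neg
    intro _
    exact Finset.mem_image_of_mem gE (Finset.mem_Icc.mpr ⟨hj2, by omega⟩)
  have hgj1C : gE (j+1) ∉ treeEdges G c \ (Finset.Icc 2 (j+1)).image gE := by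
    rw [Finset.mem_sdiff]
    push_neg
    intro _
    exact Finset.mem_image_of_mem gE (Finset.mem_Icc.mpr ⟨by omega, le_rfl⟩)
  have hgA : gE j ∈ treeEdges G c \ (Finset.Icc 2 (j-1)).image gE := by
    rw [Finset.mem_sdiff]
    refine ⟨gmem, ?_⟩
    intro hmem
    obtain ⟨l, hl, hle⟩ := Finset.mem_image.mp hmem
    rw [Finset.mem_Icc] at hl
    exact gne l j (by omega) (by omega) hjt hle
  have hCTE : treeEdges G c \ (Finset.Icc 2 (j+1)).image gE ⊆ treeEdges G c :=
    Finset.sdiff_subset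
  have hpj_mem : p j ∈ gE j := by
    rw [hgE]
    exact Sym2.mem_mk_right _ _
  have hpj_mem1 : p j ∈ gE (j+1) := by
    rw [hgE]
    simp only [Nat.add_sub_cancel]
    exact Sym2.mem_mk_left _ _
  have hsub : treeEdges G c \ (Finset.Icc 2 (j+1)).image gE
      ⊆ (treeEdges G c \ (Finset.Icc 2 (j-1)).image gE).erase (gE j) := by
    rw [hCB]
    exact Finset.erase_subset _ _
  have hclose : ∀ e ∈ (treeEdges G c \ (Finset.Icc 2 (j-1)).image gE).erase (gE j),
      (∀ x : V, ¬(x ∈ e ∧ x ∈ gE j)) →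
      e ∈ treeEdges G c \ (Finset.Icc 2 (j+1)).image gE := by
    intro e he hdisj
    rw [hCB, Finset.mem_erase]
    refine ⟨?_, he⟩
    intro heq
    exact hdisj (p j) ⟨heq ▸ hpj_mem1, hpj_mem⟩
  have hsound : ∀ e ∈ treeEdges G c \ (Finset.Icc 2 (j+1)).image gE,
      ∀ x : V, ¬(x ∈ e ∧ x ∈ gE j) := by
    intro e he x hx
    obtain ⟨hx1, hx2⟩ := hx
    have hfTE : e ∈ treeEdges G c := hCTE he
    have hgS : e ≠ gE j := fun h => hgjC (h ▸ he)
    rw [hgE, Sym2.mem_iff] at hx2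
    rcases hx2 with hx2' | hx2'
    · rw [hx2'] at hx1
      rcases F2 e hfTE (j-1) (by omega) (by omega) hx1 with h | h
      · by_cases hj3 : j = 2
        · subst hj3
          simp only [treeEdges, Finset.mem_filter] at hfTE
          exact hfTE.2.2 (h ▸ hcne)
        · rw [Finset.mem_sdiff] at he
          have hj1mem : gE (j-1) ∈ Finset.image gE (Finset.Icc 2 (j+1)) :=
            Finset.mem_image_of_mem gE (Finset.mem_Icc.mpr ⟨by omega, by omega⟩)
          exact he.2 (h ▸ hj1mem)
      · have h1 : j - 1 + 1 = j := by omega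
        rw [h1] at h
        exact hgS h
    · rw [hx2'] at hx1
      rcases F2 e hfTE j (by omega) hjt hx1 with h | h
      · exact hgS h
      · exact hgj1C (h ▸ he)
  have hM : edgeM G (gE j) = 1 / 4 := by
    have h0 : edgeM G (gE j)
        = 1 / ((G.degree (p (j-1)) : ℝ) * (G.degree (p j) : ℝ)) := by
      simp [hgE, edgeM]
    rw [h0, hpdeg (j-1) (by omega) (by omega), hpdeg j (by omega) hjt]
    norm_num
  rw [matchSum_erase G _ (treeEdges G c \ (Finset.Icc 2 (j+1)).image gE) i hi (gE j) hgA
    hsub hclose hsound, ← hBA, hM]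



lemma Kg_one {V : Type*} [Fintype V] (G : SimpleGraph V) {k : ℕ} [NeZero k]
    (c : ZMod k → V) (p : ℕ → V) (i : ℕ) : Kg G c p i 1 = Km G c i := by
  unfold Kg Km
  rw [show Finset.Icc 2 1 = (∅ : Finset ℕ) from Finset.Icc_eq_empty (by omega),
    Finset.image_empty, Finset.sdiff_empty]

lemma Km_telescope {V : Type*} [Fintype V] (G : SimpleGraph V) {k : ℕ} [NeZero k]
    (c : ZMod k → V) (t : ℕ) (p : ℕ → V)
    (hp0 : p 0 = c 0)
    (hpadj : ∀ s : ℕ, s < (t + 1) → G.Adj (p s) (p (s + 1)))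
    (hpnb : ∀ s : ℕ, s + 2 ≤ (t + 1) → p (s + 2) ≠ p s)
    (hpdeg : ∀ s : ℕ, 1 ≤ s → s ≤ t → G.degree (p s) = 2)
    (hoff : ∀ s, 1 ≤ s → s ≤ t → p s ∉ Set.range c)
    (hinj : ∀ a b, 1 ≤ a → a < b → b ≤ t → p a ≠ p b)
    (i : ℕ) (hi : 1 ≤ i) :
    ∀ r, 2 ≤ r → r ≤ t →
      Km G c i = Kg G c p i r + ∑ j ∈ Finset.Icc 2 r, (1 / 4 : ℝ) * Kg G c p (i - 1) (j + 1) := by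
  intro r hr2
  induction r, hr2 using Nat.le_induction with
  | base =>
    intro h2t
    have h := step_identity G c t p hp0 hpadj hpnb hpdeg hoff hinj 2 le_rfl h2t i hi
    have h' : Kg G c p i 1 = Kg G c p i 2 + (1 / 4 : ℝ) * Kg G c p (i - 1) (2 + 1) := h
    rw [Finset.Icc_self, Finset.sum_singleton, ← Kg_one G c p i, h']
  | succ n hn ih =>
    intro h
    have ihn := ih (by omega)
    have hstep := step_identity G c t p hp0 hpadj hpnb hpdeg hoff hinj (n + 1)
      (by omega) h i hi
    have hstep' : Kg G c p i n
        = Kg G c p i (n + 1) + (1 / 4 : ℝ) * Kg G c p (i - 1) (n + 1 + 1) := hstep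
    rw [Finset.sum_Icc_succ_top (by omega : 2 ≤ n + 1), ihn, hstep']
    ring

/-- In the cycle-plus-tree setting, if `deg v₁ = … = deg v_t = 2` and
`deg w₁ = … = deg w_t = 2`, then for all `1 ≤ i ≤ t` and `2 ≤ r ≤ t`,
`L_(2i)(2,…,r) = 2·K_(2i) - ∑_(j=2)^r (1/4)·L_(2(i-1))(2,…,j+1)`. -/
theorem Lm_recursion {V : Type*} [Fintype V] [DecidableEq V] (G : SimpleGraph V)
    (hconn : G.Connected) (k : ℕ) [NeZero k] (hk3 : 3 ≤ k) (hkodd : Odd k)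
    (c : ZMod k → V) (hcinj : Function.Injective c)
    (hcadj : ∀ i : ZMod k, G.Adj (c i) (c (i + 1)))
    (hcard : Fintype.card V = G.edgeFinset.card)
    (hdegu : G.degree (c 0) = 4) (hdegc : ∀ i : ZMod k, i ≠ 0 → G.degree (c i) = 2)
    (t : ℕ) (ht : 1 ≤ t)
    (v w : ℕ → V) (hv0 : v 0 = c 0) (hw0 : w 0 = c 0)
    (hvadj : ∀ s : ℕ, s < (t + 1) → G.Adj (v s) (v (s + 1)))
    (hwadj : ∀ s : ℕ, s < (t + 1) → G.Adj (w s) (w (s + 1)))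
    (hv1 : v 1 ∉ Set.range c) (hw1 : w 1 ∉ Set.range c) (hvw : v 1 ≠ w 1)
    (hvnb : ∀ s : ℕ, s + 2 ≤ (t + 1) → v (s + 2) ≠ v s)
    (hwnb : ∀ s : ℕ, s + 2 ≤ (t + 1) → w (s + 2) ≠ w s)
    (hvdeg : ∀ s : ℕ, 1 ≤ s → s ≤ t → G.degree (v s) = 2)
    (hwdeg : ∀ s : ℕ, 1 ≤ s → s ≤ t → G.degree (w s) = 2) :
    ∀ i : ℕ, 1 ≤ i → i ≤ t → ∀ r : ℕ, 2 ≤ r → r ≤ t →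
      Lm G c v w i r =
        2 * Km G c i - ∑ j ∈ Finset.Icc 2 r, (1 / 4 : ℝ) * Lm G c v w (i - 1) (j + 1) := by
  have hPG := paths_good G hconn k hk3 c hcinj hcadj hcard hdegu hdegc t ht v w hv0 hw0
    hvadj hwadj hv1 hw1 hvw hvnb hwnb hvdeg hwdeg
  have hoffv : ∀ s, 1 ≤ s → s ≤ t → v s ∉ Set.range c := fun s h1 h2 => (hPG s h1 h2).1
  have hoffw : ∀ s, 1 ≤ s → s ≤ t → w s ∉ Set.range c := fun s h1 h2 => (hPG s h1 h2).2.1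
  have hinjv : ∀ a b, 1 ≤ a → a < b → b ≤ t → v a ≠ v b :=
    fun a b h1 h2 h3 => (hPG b (by omega) h3).2.2.1 a h1 h2
  have hinjw : ∀ a b, 1 ≤ a → a < b → b ≤ t → w a ≠ w b :=
    fun a b h1 h2 h3 => (hPG b (by omega) h3).2.2.2.1 a h1 h2
  intro i hi1 hit r hr2 hrt
  have hTv := Km_telescope G c t v hv0 hvadj hvnb hvdeg hoffv hinjv i hi1 r hr2 hrt
  have hTw := Km_telescope G c t w hw0 hwadj hwnb hwdeg hoffw hinjw i hi1 r hr2 hrt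
  have hsum : ∑ j ∈ Finset.Icc 2 r, (1 / 4 : ℝ) * Lm G c v w (i - 1) (j + 1)
      = (∑ j ∈ Finset.Icc 2 r, (1 / 4 : ℝ) * Kg G c v (i - 1) (j + 1))
        + ∑ j ∈ Finset.Icc 2 r, (1 / 4 : ℝ) * Kg G c w (i - 1) (j + 1) := by
    rw [← Finset.sum_add_distrib]
    refine Finset.sum_congr rfl (fun j _ => ?_)
    rw [Lm]
    ring
  rw [Lm, hsum]
  linarith [hTv, hTw]


end GroverPaper
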